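/- Every element of the subgroup of SL(2,ℝ) generated by [[1,√μ],[0,1]] and [[1,0],[-√μ,1]] has trace lying in ℤ[μ], where μ > 0 is real. -/
import Mathlib


open Matrix

theorem stmt_2 (μ : ℝ) (hμ : 0 < μ)
    (A B : Matrix.SpecialLinearGroup (Fin 2) ℝ)
    (hA : (A : Matrix (Fin 2) (Fin 2) ℝ) = !![1, Real.sqrt μ; 0, 1])
    (hB : (B : Matrix (Fin 2) (Fin 2) ℝ) = !![1, 0; -Real.sqrt μ, 1]) :
    ∀ g ∈ Subgroup.closure ({A, B} : Set (Matrix.SpecialLinearGroup (Fin 2) ℝ)),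
      Matrix.trace (g : Matrix (Fin 2) (Fin 2) ℝ) ∈ Subring.closure {μ} := by
  set R := Subring.closure ({μ} : Set ℝ) with hR
  have hμR : μ ∈ R := Subring.subset_closure rfl
  have hss : Real.sqrt μ * Real.sqrt μ = μ := Real.mul_self_sqrt hμ.le
  set P : Matrix.SpecialLinearGroup (Fin 2) ℝ → Prop := fun g =>
    ((g : Matrix (Fin 2) (Fin 2) ℝ) 0 0 ∈ R) ∧ ((g : Matrix (Fin 2) (Fin 2) ℝ) 1 1 ∈ R) ∧
    (∃ a ∈ R, (g : Matrix (Fin 2) (Fin 2) ℝ) 0 1 = Real.sqrt μ * a) ∧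
    (∃ b ∈ R, (g : Matrix (Fin 2) (Fin 2) ℝ) 1 0 = Real.sqrt μ * b) with hP
  have key : ∀ g ∈ Subgroup.closure ({A, B} : Set (Matrix.SpecialLinearGroup (Fin 2) ℝ)), P g := by
    intro g hg
    induction hg using Subgroup.closure_induction with
    | mem x hx =>
      rcases hx with h | h
      · subst h
        refine ⟨?_, ?_, ⟨1, R.one_mem, ?_⟩, ⟨0, R.zero_mem, ?_⟩⟩ <;>
          simp [hA, R.one_mem]
      · subst h
        refine ⟨?_, ?_, ⟨0, R.zero_mem, ?_⟩, ⟨-1, R.neg_mem R.one_mem, ?_⟩⟩ <;>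
          simp [hB, R.one_mem]
    | one =>
      refine ⟨?_, ?_, ⟨0, R.zero_mem, ?_⟩, ⟨0, R.zero_mem, ?_⟩⟩ <;> simp [R.one_mem]
    | mul x y hx hy px py =>
      obtain ⟨hx00, hx11, ⟨a, haR, ha⟩, ⟨b, hbR, hb⟩⟩ := px
      obtain ⟨hy00, hy11, ⟨c, hcR, hc⟩, ⟨d, hdR, hd⟩⟩ := py
      have hcoe : ((x * y : Matrix.SpecialLinearGroup (Fin 2) ℝ) : Matrix (Fin 2) (Fin 2) ℝ)
          = (x : Matrix (Fin 2) (Fin 2) ℝ) * y := rfl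
      refine ⟨?_, ?_, ⟨?_, ?_, ?_⟩, ⟨?_, ?_, ?_⟩⟩
      · rw [hcoe, Matrix.mul_apply, Fin.sum_univ_two, ha, hd]
        have : Real.sqrt μ * a * (Real.sqrt μ * d) = μ * (a * d) := by
          rw [mul_mul_mul_comm, hss]
        rw [this]
        exact R.add_mem (R.mul_mem hx00 hy00) (R.mul_mem hμR (R.mul_mem haR hdR))
      · rw [hcoe, Matrix.mul_apply, Fin.sum_univ_two, hb, hc]
        have : Real.sqrt μ * b * (Real.sqrt μ * c)
            + (x : Matrix (Fin 2) (Fin 2) ℝ) 1 1 * y 1 1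
            = μ * (b * c) + (x : Matrix (Fin 2) (Fin 2) ℝ) 1 1 * y 1 1 := by
          rw [mul_mul_mul_comm, hss]
        rw [this]
        exact R.add_mem (R.mul_mem hμR (R.mul_mem hbR hcR)) (R.mul_mem hx11 hy11)
      · exact (x : Matrix (Fin 2) (Fin 2) ℝ) 0 0 * c + a * (y : Matrix (Fin 2) (Fin 2) ℝ) 1 1
      · exact R.add_mem (R.mul_mem hx00 hcR) (R.mul_mem haR hy11)
      · rw [hcoe, Matrix.mul_apply, Fin.sum_univ_two, ha, hc]; ring
      · exact b * (y : Matrix (Fin 2) (Fin 2) ℝ) 0 0 + (x : Matrix (Fin 2) (Fin 2) ℝ) 1 1 * d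
      · exact R.add_mem (R.mul_mem hbR hy00) (R.mul_mem hx11 hdR)
      · rw [hcoe, Matrix.mul_apply, Fin.sum_univ_two, hb, hd]; ring
    | inv x hx px =>
      obtain ⟨hx00, hx11, ⟨a, haR, ha⟩, ⟨b, hbR, hb⟩⟩ := px
      have hinv : ((x⁻¹ : Matrix.SpecialLinearGroup (Fin 2) ℝ) : Matrix (Fin 2) (Fin 2) ℝ)
          = Matrix.adjugate (x : Matrix (Fin 2) (Fin 2) ℝ) :=
        Matrix.SpecialLinearGroup.coe_inv x
      rw [hP]
      simp only [hinv, Matrix.adjugate_fin_two]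
      refine ⟨?_, ?_, ⟨-a, R.neg_mem haR, ?_⟩, ⟨-b, R.neg_mem hbR, ?_⟩⟩
      · simpa using hx11
      · simpa using hx00
      · simp [ha]
      · simp [hb]
  intro g hg
  obtain ⟨h00, h11, _, _⟩ := key g hg
  have : Matrix.trace (g : Matrix (Fin 2) (Fin 2) ℝ)
      = (g : Matrix (Fin 2) (Fin 2) ℝ) 0 0 + (g : Matrix (Fin 2) (Fin 2) ℝ) 1 1 :=
    Matrix.trace_fin_two _
  rw [this]
  exact R.add_mem h00 h11
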